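/- arXiv:1107.2823 — 3 statements merged into one kernel-verified Lean document; each statement's English description precedes it below -/
import Mathlib

section
/- In an idempotent right quasigroup (X, ∘, •), the inverse operation satisfies the involution-like identity −^{x∘u}(−ˣ u) = u for all x, u ∈ X, where −ʸ w = (y∘w)•y. -/
/-- In an idempotent right quasigroup `(X, ∘, •)`, the based inverse
`−ʸ w = (y ∘ w) • y` satisfies `−^{x∘u}(−ˣ u) = u`. -/
theorem irq_inv_involution {X : Type*} (c b : X → X → X)
    (h1 : ∀ x y : X, c x (b x y) = y)
    (h2 : ∀ x y : X, b x (c x y) = y)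
    (h3 : ∀ x : X, c x x = x)
    (h4 : ∀ x : X, b x x = x)
    (inv : X → X → X) (hinv : ∀ y w, inv y w = b (c y w) y) :
    ∀ x u : X, inv (c x u) (inv x u) = u := by
  intro x u
  rw [hinv, hinv, h1, h2]
end

section
/- In an idempotent right quasigroup (X, ∘, •), the sums based at shifted points satisfy the associativity-type identity u +ˣ (v +^{x∘u} w) = (u +ˣ v) +ˣ w for all x, u, v, w ∈ X. -/
/-- In an idempotent right quasigroup `(X, ∘, •)`, the based sums
`a +ʸ b = y • ((y ∘ a) ∘ b)` satisfy the associativity-type identity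
`u +ˣ (v +^{x∘u} w) = (u +ˣ v) +ˣ w`. -/
theorem irq_sum_assoc {X : Type*} (c b : X → X → X)
    (h1 : ∀ x y : X, c x (b x y) = y)
    (h2 : ∀ x y : X, b x (c x y) = y)
    (h3 : ∀ x : X, c x x = x)
    (h4 : ∀ x : X, b x x = x)
    (sum : X → X → X → X) (hsum : ∀ y a v, sum y a v = b y (c (c y a) v)) :
    ∀ x u v w : X, sum x u (sum (c x u) v w) = sum x (sum x u v) w := by
  intro x u v w
  simp [hsum, h1]
end

section
/- Let (X,d,δ) be a dilatation structure. For any x ∈ X, the rescaled semi-distance δˣ_ε d(u,v) := (1/|ε|) d(δˣ_ε u, δˣ_ε v) satisfies, in the limit ε → 0, the cone property: d^x(δˣ_μ u, δˣ_μ v) = |μ| · d^x(u,v) for every μ ∈ Γ with |μ| < 1, where d^x is the limit semi-distance from axiom A3. -/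
open Filter Topology

/-- Cone property of a dilatation structure `(X,d,δ)`: for the limit
semi-distance `dx x` from axiom A3 one has
`d^x(δˣ_μ u, δˣ_μ v) = |μ| ⬝ d^x(u,v)` for every `μ ∈ Γ` with `|μ| < 1`. -/
theorem dilatation_structure_cone_property
    {X : Type*} [MetricSpace X] {Γ : Type*} [CommGroup Γ]
    (absΓ : Γ →* ℝ) (habs : ∀ ε : Γ, 0 < absΓ ε)
    (δ : Γ → X → X → X)
    -- A1: each `δˣ = δ · x` is an action of `Γ` by transformations fixing `x`
    (hfix : ∀ (ε : Γ) (x : X), δ ε x x = x)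
    (hone : ∀ (x y : X), δ 1 x y = y)
    (hact : ∀ (ε μ : Γ) (x y : X), δ ε x (δ μ x y) = δ (ε * μ) x y)
    -- the filter `|ε| → 0` is nontrivial
    (hne : (Filter.comap absΓ (nhdsWithin 0 (Set.Ioi 0))).NeBot)
    -- A2: `δˣ_ε y → x` as `|ε| → 0`
    (hA2 : ∀ x y : X, Tendsto (fun ε : Γ => δ ε x y)
      (Filter.comap absΓ (nhdsWithin 0 (Set.Ioi 0))) (nhds x))
    -- A3: the rescaled distances converge to the limit semi-distance `dx`
    (dx : X → X → X → ℝ)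
    (hA3 : ∀ x u v : X,
      Tendsto (fun ε : Γ => (absΓ ε)⁻¹ * dist (δ ε x u) (δ ε x v))
        (Filter.comap absΓ (nhdsWithin 0 (Set.Ioi 0)))
        (nhds (dx x u v))) :
    ∀ (x u v : X) (μ : Γ), absΓ μ < 1 →
      dx x (δ μ x u) (δ μ x v) = absΓ μ * dx x u v := by
  intro x u v μ hμ
  set L := Filter.comap absΓ (nhdsWithin (0:ℝ) (Set.Ioi 0)) with hL
  -- the map ε ↦ ε * μ sends the filter L to itself
  have hmul : Tendsto (fun ε : Γ => ε * μ) L L := by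
    rw [hL, tendsto_comap_iff]
    have h1 : Tendsto absΓ L (nhdsWithin (0:ℝ) (Set.Ioi 0)) := tendsto_comap
    have h2 : Tendsto (fun t : ℝ => t * absΓ μ)
        (nhdsWithin (0:ℝ) (Set.Ioi 0)) (nhdsWithin (0:ℝ) (Set.Ioi 0)) := by
      rw [tendsto_nhdsWithin_iff]
      constructor
      · have h3 : Tendsto (fun t : ℝ => t * absΓ μ) (nhds 0) (nhds (0 * absΓ μ)) :=
          (continuous_mul_right (absΓ μ)).tendsto 0
        simpa using h3.mono_left nhdsWithin_le_nhds
      · filter_upwards [self_mem_nhdsWithin] with t ht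
        exact mul_pos ht (habs μ)
    have h4 : Tendsto (fun ε : Γ => absΓ ε * absΓ μ) L
        (nhdsWithin (0:ℝ) (Set.Ioi 0)) := h2.comp h1
    exact h4.congr fun ε => by simp [Function.comp, map_mul]
  -- two expressions for the limit
  have h1 : Tendsto (fun ε : Γ => (absΓ ε)⁻¹ * dist (δ ε x (δ μ x u)) (δ ε x (δ μ x v)))
      L (nhds (dx x (δ μ x u) (δ μ x v))) := hA3 x (δ μ x u) (δ μ x v)
  have h2 : Tendsto (fun ε : Γ => (absΓ ε)⁻¹ * dist (δ ε x (δ μ x u)) (δ ε x (δ μ x v)))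
      L (nhds (absΓ μ * dx x u v)) := by
    have hcomp : Tendsto
        (fun ε : Γ => absΓ μ * ((absΓ (ε * μ))⁻¹ * dist (δ (ε * μ) x u) (δ (ε * μ) x v)))
        L (nhds (absΓ μ * dx x u v)) :=
      (tendsto_const_nhds.mul ((hA3 x u v).comp hmul))
    refine hcomp.congr fun ε => ?_
    have h0 : absΓ ε ≠ 0 := (habs ε).ne'
    have hμ0 : absΓ μ ≠ 0 := (habs μ).ne'
    rw [hact, hact, map_mul, mul_inv]
    field_simp
  exact tendsto_nhds_unique h1 h2
end
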